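/- arXiv:1110.4896 — 4 statements merged into one kernel-verified Lean document; each statement's English description precedes it below -/
import Mathlib

section
/- Let D be a digraph with maximum out-degree Δ_o, and suppose there is a partial proper coloring of D using at most Δ_o + 1 − r colors such that for every vertex v there are at least r colors each of which appears on at least two vertices of the out-neighborhood N⁺(v). Then D is (Δ_o + 1 − r)-colorable. -/
/-- A set `A` of vertices of a digraph (given by its arc relation `Adj`) is *acyclic*
if the subdigraph induced on `A` contains no directed cycle; equivalently, no vertex of `A`
lies on a closed directed walk all of whose vertices are in `A`. -/
def AcyclicSet {V : Type*} (Adj : V → V → Prop) (A : Set V) : Prop :=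
  ∀ v ∈ A, ¬ Relation.TransGen (fun x y => x ∈ A ∧ y ∈ A ∧ Adj x y) v v

/-- A digraph is `k`-colorable if its vertex set can be partitioned into `k` acyclic sets. -/
def DiColorable {V : Type*} (Adj : V → V → Prop) (k : ℕ) : Prop :=
  ∃ f : V → Fin k, ∀ i : Fin k, AcyclicSet Adj {v | f v = i}

/-- The chromatic number of a digraph: the least `k` admitting a partition of the
vertex set into `k` acyclic sets. -/
noncomputable def dichromNum {V : Type*} (Adj : V → V → Prop) : ℕ :=
  sInf {k | DiColorable Adj k}

/-- A digraph is digon-free if it has no directed cycle of length two. -/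
def DigonFree {V : Type*} (Adj : V → V → Prop) : Prop :=
  ∀ u v, Adj u v → ¬ Adj v u

/-- The out-degree of a vertex. -/
noncomputable def outDeg {V : Type*} (Adj : V → V → Prop) (v : V) : ℕ :=
  Nat.card {u // Adj v u}

/-- The in-degree of a vertex. -/
noncomputable def inDeg {V : Type*} (Adj : V → V → Prop) (v : V) : ℕ :=
  Nat.card {u // Adj u v}

/-- `Δ̃(D)`: the maximum geometric mean of the out-degree and in-degree of a vertex. -/
noncomputable def tildeDelta {V : Type*} [Fintype V] (Adj : V → V → Prop) : ℝ :=
  ⨆ v : V, Real.sqrt ((outDeg Adj v : ℝ) * (inDeg Adj v : ℝ))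

/-- The underlying undirected graph of a digraph. -/
def underGraph {V : Type*} (Adj : V → V → Prop) : SimpleGraph V where
  Adj a b := a ≠ b ∧ (Adj a b ∨ Adj b a)
  symm := ⟨fun _ _ h => ⟨h.1.symm, h.2.symm⟩⟩
  loopless := ⟨fun _ h => h.1 rfl⟩



/-!
Greedy extension. At an uncoloured vertex `v`, the colours repeated on `N⁺(v)` each use up at
least two out-neighbours, so at most `Δ_o - r` colours occur on `N⁺(v)` and one of the
`Δ_o + 1 - r` colours is missing there. Giving `v` that colour keeps its class acyclic, since `v`
has no out-arc into the class and a directed cycle through `v` must leave `v`. Extending the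
colouring only adds repeated colours, so the hypothesis survives and we may colour every vertex.
-/

open Finset

variable {V α : Type*} {Adj : V → V → Prop}

theorem AcyclicSet.mono {A B : Set V} (hB : AcyclicSet Adj B) (hAB : A ⊆ B) :
    AcyclicSet Adj A := fun v hv hcyc =>
  hB v (hAB hv) (Relation.TransGen.mono (fun _ _ h => ⟨hAB h.1, hAB h.2.1, h.2.2⟩) _ _ hcyc)

theorem AcyclicSet.insert_of_forall_not_adj {A : Set V} (hA : AcyclicSet Adj A) {v : V}
    (hv : ∀ u ∈ insert v A, ¬ Adj v u) : AcyclicSet Adj (insert v A) := by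
  have src_ne : ∀ {x y}, (x ∈ insert v A ∧ y ∈ insert v A ∧ Adj x y) → x ≠ v := by
    rintro x y ⟨-, hy, hxy⟩ rfl
    exact hv y hy hxy
  have avoid : ∀ {a b},
      Relation.TransGen (fun x y => x ∈ insert v A ∧ y ∈ insert v A ∧ Adj x y)
      a b → b ≠ v → Relation.TransGen (fun x y => x ∈ A ∧ y ∈ A ∧ Adj x y) a b := by
    intro a b hab
    induction hab with
    | single h =>
      exact fun hb => .single ⟨Set.mem_of_mem_insert_of_ne h.1 (src_ne h),
        Set.mem_of_mem_insert_of_ne h.2.1 hb, h.2.2⟩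
    | tail _ h ih =>
      exact fun hc => (ih (src_ne h)).tail ⟨Set.mem_of_mem_insert_of_ne h.1 (src_ne h),
        Set.mem_of_mem_insert_of_ne h.2.1 hc, h.2.2⟩
  intro w hw hcyc
  by_cases hwv : w = v
  · subst hwv
    obtain ⟨c, hwc, -⟩ := Relation.TransGen.head'_iff.mp hcyc
    exact hv c hwc.2.1 hwc.2.2
  · exact hA w (Set.mem_of_mem_insert_of_ne hw hwv) (avoid hcyc hwv)

theorem Finset.card_add_card_filter_one_lt_le {β γ : Type*} [DecidableEq β] {s : Finset β}
    {t : Finset γ} {F : γ → Finset β} (hF : (t : Set γ).PairwiseDisjoint F)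
    (hFs : ∀ i ∈ t, F i ⊆ s) (hne : ∀ i ∈ t, (F i).Nonempty) :
    #t + #{i ∈ t | 1 < #(F i)} ≤ #s :=
  calc #t + #{i ∈ t | 1 < #(F i)} = ∑ i ∈ t, (1 + if 1 < #(F i) then 1 else 0) := by
        rw [sum_add_distrib, sum_boole, sum_const, smul_eq_mul, mul_one, Nat.cast_id]
    _ ≤ ∑ i ∈ t, #(F i) := sum_le_sum fun i hi => by
        have := (hne i hi).card_pos
        split_ifs <;> omega
    _ = #(t.biUnion F) := (card_biUnion hF).symm
    _ ≤ #s := card_le_card (biUnion_subset.mpr hFs)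

def IsPartialDicoloring (Adj : V → V → Prop) (f : V → Option α) : Prop :=
  ∀ i, AcyclicSet Adj {v | f v = some i}

def repeatedColors (Adj : V → V → Prop) (f : V → Option α) (v : V) : Set α :=
  {i | ∃ u w : V, u ≠ w ∧ Adj v u ∧ Adj v w ∧ f u = some i ∧ f w = some i}

theorem repeatedColors_mono {f g : V → Option α} (hfg : ∀ u i, f u = some i → g u = some i)
    (v : V) : repeatedColors Adj f v ⊆ repeatedColors Adj g v := by
  rintro i ⟨u, w, huw, hu, hw, hfu, hfw⟩
  exact ⟨u, w, huw, hu, hw, hfg u i hfu, hfg w i hfw⟩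

theorem exists_color_not_on_outNeighbors [Fintype V] [Fintype α] (f : V → Option α) {v : V}
    {r : ℕ} (hrep : r ≤ Nat.card (repeatedColors Adj f v))
    (hdeg : outDeg Adj v < Fintype.card α + r) : ∃ i, ∀ u, Adj v u → f u ≠ some i := by
  classical
  by_contra! hall
  let F : α → Finset V := fun i => {u | Adj v u ∧ f u = some i}
  have hrep_eq : repeatedColors Adj f v = ↑({i | 1 < #(F i)} : Finset α) := by
    ext i
    simp only [repeatedColors, F, coe_filter, mem_univ, true_and, Set.mem_ofPred_eq, one_lt_card,
      mem_filter]
    constructor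
    · rintro ⟨u, w, huw, hu, hw, hfu, hfw⟩
      exact ⟨u, ⟨hu, hfu⟩, w, ⟨hw, hfw⟩, huw⟩
    · rintro ⟨u, ⟨hu, hfu⟩, w, ⟨hw, hfw⟩, huw⟩
      exact ⟨u, w, huw, hu, hw, hfu, hfw⟩
  have hcount := card_add_card_filter_one_lt_le (s := {u | Adj v u}) (t := univ) (F := F)
    (fun i _ j _ hij => disjoint_filter.mpr fun u _ hi hj => hij (Option.some_injective _
      (hi.2.symm.trans hj.2)))
    (fun _ _ _ hu => mem_filter.mpr ⟨mem_univ _, (mem_filter.mp hu).2.1⟩)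
    (fun i _ => let ⟨u, hu⟩ := hall i; ⟨u, mem_filter.mpr ⟨mem_univ u, hu⟩⟩)
  rw [hrep_eq, Nat.card_coe_set_eq, Set.ncard_coe_finset] at hrep
  rw [outDeg, Nat.card_eq_fintype_card, Fintype.card_subtype] at hdeg
  rw [card_univ] at hcount
  omega

theorem IsPartialDicoloring.update [DecidableEq V] {f : V → Option α}
    (hf : IsPartialDicoloring Adj f) {v : V} (hloop : ¬ Adj v v) {i : α}
    (hfree : ∀ u, Adj v u → f u ≠ some i) :
    IsPartialDicoloring Adj (Function.update f v (some i)) := by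
  intro j
  by_cases hij : j = i
  · subst hij
    have hins : AcyclicSet Adj (insert v {u | f u = some j}) :=
      (hf j).insert_of_forall_not_adj fun u hu huv => by
        rcases hu with rfl | hu
        exacts [hloop huv, hfree u huv hu]
    refine hins.mono fun u hu => ?_
    by_cases huv : u = v
    · exact Or.inl huv
    · exact Or.inr ((Function.update_of_ne huv _ f).symm.trans hu)
  · refine (hf j).mono fun u hu => ?_
    by_cases huv : u = v
    · subst huv
      simp only [Set.mem_ofPred_eq, Function.update_self, Option.some.injEq] at hu
      exact absurd hu.symm hij
    · exact (Function.update_of_ne huv _ f).symm.trans hu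

theorem IsPartialDicoloring.exists_extend_vertex [Fintype V] [Fintype α] {f : V → Option α}
    (hf : IsPartialDicoloring Adj f) (hloop : ∀ v, ¬ Adj v v) {r : ℕ}
    (hrep : ∀ v, r ≤ Nat.card (repeatedColors Adj f v))
    (hdeg : ∀ v, outDeg Adj v < Fintype.card α + r) (v : V) :
    ∃ g, IsPartialDicoloring Adj g ∧ (∀ u i, f u = some i → g u = some i) ∧
      g v ≠ none := by
  classical
  cases hv : f v with
  | some j => exact ⟨f, hf, fun _ _ h => h, by simp [hv]⟩
  | none =>
    obtain ⟨i, hfree⟩ := exists_color_not_on_outNeighbors f (hrep v) (hdeg v)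
    refine ⟨Function.update f v (some i), hf.update (hloop v) hfree, fun u j hu => ?_, by simp⟩
    rwa [Function.update_of_ne (by rintro rfl; simp [hv] at hu)]

theorem IsPartialDicoloring.exists_extend_finset [Fintype V] [Fintype α] {f : V → Option α}
    (hf : IsPartialDicoloring Adj f) (hloop : ∀ v, ¬ Adj v v) {r : ℕ}
    (hrep : ∀ v, r ≤ Nat.card (repeatedColors Adj f v))
    (hdeg : ∀ v, outDeg Adj v < Fintype.card α + r) (s : Finset V) :
    ∃ g, IsPartialDicoloring Adj g ∧ (∀ u i, f u = some i → g u = some i) ∧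
      ∀ v ∈ s, g v ≠ none := by
  classical
  induction s using Finset.induction_on with
  | empty => exact ⟨f, hf, fun _ _ h => h, by simp⟩
  | insert v s _ ih =>
    obtain ⟨g, hg, hfg, hgs⟩ := ih
    have hrep_g : ∀ w, r ≤ Nat.card (repeatedColors Adj g w) := fun w =>
      (hrep w).trans (Nat.card_mono (Set.toFinite _) (repeatedColors_mono hfg w))
    obtain ⟨g', hg', hgg', hg'v⟩ := hg.exists_extend_vertex hloop hrep_g hdeg v
    refine ⟨g', hg', fun u i h => hgg' u i (hfg u i h), ?_⟩
    rintro w hw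
    rcases mem_insert.mp hw with rfl | hws
    · exact hg'v
    · obtain ⟨j, hj⟩ := Option.ne_none_iff_exists'.mp (hgs w hws)
      simp [hgg' w j hj]

theorem IsPartialDicoloring.diColorable {k : ℕ} {f : V → Option (Fin k)}
    (hf : IsPartialDicoloring Adj f) (htotal : ∀ v, f v ≠ none) : DiColorable Adj k :=
  ⟨fun v => (f v).get (Option.isSome_iff_ne_none.mpr (htotal v)), fun i =>
    (hf i).mono fun v hv => by rw [Set.mem_ofPred_eq, ← hv, Option.some_get]⟩

/-- **Lemma 1.** Let `D` be a digraph with maximum out-degree `Δ_o`, and suppose we have a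
partial proper coloring of `D` with at most `Δ_o + 1 - r` colors (each color class being
acyclic) such that for every vertex `v` at least `r` colors appear on at least two vertices
of `N⁺(v)`.  Then `D` is `(Δ_o + 1 - r)`-colorable. -/
theorem stmt_3 {V : Type} [Fintype V] (Adj : V → V → Prop)
    (hloopless : ∀ v, ¬ Adj v v)
    (Δo : ℕ) (hΔo : Δo = ⨆ v, outDeg Adj v) (r : ℕ)
    -- a partial proper coloring with (at most) `Δ_o + 1 - r` colors
    (f : V → Option (Fin (Δo + 1 - r)))
    (hproper : ∀ i : Fin (Δo + 1 - r), AcyclicSet Adj {v | f v = some i})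
    -- for every vertex `v`, at least `r` colors appear on at least two out-neighbors of `v`
    (hrep : ∀ v : V, r ≤ Nat.card {i : Fin (Δo + 1 - r) //
      ∃ u w : V, u ≠ w ∧ Adj v u ∧ Adj v w ∧ f u = some i ∧ f w = some i}) :
    DiColorable Adj (Δo + 1 - r) := by
  have hdeg : ∀ v, outDeg Adj v < Fintype.card (Fin (Δo + 1 - r)) + r := fun v => by
    have : outDeg Adj v ≤ Δo := hΔo ▸ le_ciSup (Set.finite_range _).bddAbove v
    rw [Fintype.card_fin]
    omega
  obtain ⟨g, hg, -, htotal⟩ :=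
    IsPartialDicoloring.exists_extend_finset hproper hloopless hrep hdeg univ
  exact hg.diColorable fun v => htotal v (mem_univ v)
end

section
/- Let D be a digon-free digraph with Δ̃ = Δ̃(D), let c₁ = 1 − e^{−11}/3 and c₂ = 1 + e^{−11}/3, and suppose that every vertex v of D satisfies c₁Δ̃ < d⁺(v) < c₂Δ̃ and c₁Δ̃ < d⁻(v) < c₂Δ̃. Set C = ⌊Δ̃/2⌋ and color each vertex of D independently and uniformly at random with a color from {1, …, C}; then uncolor every vertex that lies on a monochromatic directed path with at least two arcs. For a vertex v, let X_v be the number of colors i such that at least two out-neighbors of v were assigned color i and all out-neighbors of v assigned color i retain their color after the uncoloring. Then, provided Δ̃ is sufficiently large, E[X_v] ≥ Δ̃/e^{11} − 1. -/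
/-- Given a random color assignment `σ : V → Fin C`, a vertex `u` gets *uncolored* if it lies
on a monochromatic directed path with at least two arcs, i.e. there are distinct vertices
`x → y → z` all of the same color with `u ∈ {x, y, z}`. -/
def Uncolored {V : Type*} (Adj : V → V → Prop) {C : ℕ} (σ : V → Fin C) (u : V) : Prop :=
  ∃ x y z : V, x ≠ y ∧ y ≠ z ∧ x ≠ z ∧ Adj x y ∧ Adj y z ∧
    σ x = σ y ∧ σ y = σ z ∧ (u = x ∨ u = y ∨ u = z)

/-- `X_v`: the number of colors `i` that are assigned to at least two out-neighbors of `v`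
and such that all out-neighbors of `v` assigned color `i` retain their color after the
uncoloring step. -/
noncomputable def Xv {V : Type*} (Adj : V → V → Prop) {C : ℕ} (σ : V → Fin C) (v : V) : ℕ :=
  Nat.card {i : Fin C //
    2 ≤ Nat.card {u : V // Adj v u ∧ σ u = i} ∧
    ∀ u : V, Adj v u → σ u = i → ¬ Uncolored Adj σ u}

/-- The expectation of `X_v` when each vertex independently receives a uniformly random
color from `Fin C` (average over all `C ^ |V|` assignments). -/
noncomputable def expXv {V : Type*} [Fintype V] [DecidableEq V] (Adj : V → V → Prop)
    (C : ℕ) (v : V) : ℝ :=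
  (∑ σ : V → Fin C, (Xv Adj σ v : ℝ)) / (C : ℝ) ^ (Fintype.card V)

/-
For distinct out-neighbours `u, w` of `v` and a color `i`, consider the event that `u` and `w`
both get `i` while no other vertex of `N⁺(v) ∪ N(u) ∪ N(w)` does. Then the color class of `i`
in `N⁺(v)` is exactly `{u, w}`, and no monochromatic path can pass through `u` or `w`, since it
would stay inside `{u, w}`; so `i` is counted by `X_v`, and each counted color arises from at
most two ordered pairs. The event has probability `C⁻² (1 - 1/C)^{|N|}`, where `N` is that set
less `{u, w}`, so `|N| ≤ 5 c₂ Δ̃`; hence `E[X_v] ≥ d⁺(v)(d⁺(v) - 1)(1 - 1/C)^{5c₂Δ̃} / (2C)`,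
and `(1 - 1/C)^m ≥ e^{-m/(C-1)}` gives the bound once `C ≈ Δ̃/2` is large.
-/

open Finset

theorem Real.exp_neg_div_le_one_sub_inv_pow {x : ℝ} (hx : 1 < x) (m : ℕ) :
    Real.exp (-(m / (x - 1))) ≤ (1 - x⁻¹) ^ m := by
  have hy : 0 < 1 - x⁻¹ := sub_pos.2 (inv_lt_one_of_one_lt₀ hx)
  have h : -(x - 1)⁻¹ ≤ Real.log (1 - x⁻¹) := by
    convert Real.one_sub_inv_le_log_of_pos hy using 1
    have : x - 1 ≠ 0 := by linarith
    field_simp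
    ring
  rw [← Real.exp_log hy, ← Real.exp_nat_mul, Real.exp_le_exp, div_eq_mul_inv, ← mul_neg]
  exact mul_le_mul_of_nonneg_left h m.cast_nonneg

theorem card_filter_forall_eq_forall_ne_div_pow {V : Type*} [Fintype V] [DecidableEq V] {C : ℕ}
    (hC : 0 < C) (i : Fin C) {S T : Finset V} (hST : Disjoint S T) :
    (#{σ : V → Fin C | (∀ x ∈ S, σ x = i) ∧ ∀ x ∈ T, σ x ≠ i} : ℝ) / (C : ℝ) ^ Fintype.card V
      = (C : ℝ)⁻¹ ^ #S * (1 - (C : ℝ)⁻¹) ^ #T := by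
  set A : V → Finset (Fin C) := fun x => if x ∈ S then {i} else if x ∈ T then univ.erase i else univ
  have hA : ({σ : V → Fin C | (∀ x ∈ S, σ x = i) ∧ ∀ x ∈ T, σ x ≠ i} : Finset _) =
      Fintype.piFinset A := by
    ext σ
    simp only [mem_filter, mem_univ, true_and, Fintype.mem_piFinset, A]
    refine ⟨fun ⟨hS, hT⟩ x => ?_, fun h => ⟨fun x hx => ?_, fun x hx => ?_⟩⟩
    · split_ifs with hxS hxT <;> simp [*]
    · simpa [hx] using h x
    · simpa [hx, disjoint_right.1 hST hx] using h x
  have hC' : (C : ℝ) ≠ 0 := by positivity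
  rw [hA, Fintype.card_piFinset, Nat.cast_prod, ← card_univ, ← prod_const, ← prod_div_distrib,
    ← prod_subset (subset_univ (S ∪ T)), prod_union hST]
  · congr 1
    · rw [← prod_const]
      exact prod_congr rfl fun x hx => by simp [A, hx]
    · rw [← prod_const]
      refine prod_congr rfl fun x hx => ?_
      simp [A, hx, disjoint_right.1 hST hx, Nat.cast_sub hC, sub_div, hC']
  · intro x _ hx
    simp only [mem_union, not_or] at hx
    simp [A, hx, hC']

def RepeatedRetainedColor {V : Type*} (Adj : V → V → Prop) {C : ℕ} (σ : V → Fin C) (v : V)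
    (i : Fin C) : Prop :=
  2 ≤ Nat.card {u : V // Adj v u ∧ σ u = i} ∧ ∀ u : V, Adj v u → σ u = i → ¬ Uncolored Adj σ u

section

variable {V : Type*} [Fintype V] (Adj : V → V → Prop) [DecidableRel Adj]

def outNbrs (v : V) : Finset V := {u | Adj v u}

def inNbrs (v : V) : Finset V := {u | Adj u v}

theorem card_outNbrs (v : V) : #(outNbrs Adj v) = outDeg Adj v := by
  rw [outDeg, Nat.card_eq_fintype_card, Fintype.card_subtype, outNbrs]

theorem card_inNbrs (v : V) : #(inNbrs Adj v) = inDeg Adj v := by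
  rw [inDeg, Nat.card_eq_fintype_card, Fintype.card_subtype, inNbrs]

variable [DecidableEq V]

def pairNbhd (v u w : V) : Finset V :=
  (outNbrs Adj v ∪ outNbrs Adj u ∪ inNbrs Adj u ∪ outNbrs Adj w ∪ inNbrs Adj w) \ {u, w}

theorem card_pairNbhd_le (v u w : V) : #(pairNbhd Adj v u w) ≤
    outDeg Adj v + outDeg Adj u + inDeg Adj u + outDeg Adj w + inDeg Adj w := by
  simp only [← card_outNbrs, ← card_inNbrs]
  refine (card_le_card sdiff_subset).trans ?_
  refine (card_union_le _ _).trans (Nat.add_le_add_right ?_ _)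
  refine (card_union_le _ _).trans (Nat.add_le_add_right ?_ _)
  refine (card_union_le _ _).trans (Nat.add_le_add_right ?_ _)
  exact card_union_le _ _

def IsolatedPair {C : ℕ} (σ : V → Fin C) (i : Fin C) (v u w : V) : Prop :=
  σ u = i ∧ σ w = i ∧ ∀ x ∈ pairNbhd Adj v u w, σ x ≠ i

instance {C : ℕ} (σ : V → Fin C) (i : Fin C) (v u w : V) :
    Decidable (IsolatedPair Adj σ i v u w) :=
  inferInstanceAs (Decidable (_ ∧ _ ∧ _))

namespace IsolatedPair

variable {Adj} {C : ℕ} {σ : V → Fin C} {i : Fin C} {v u w : V}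

theorem eq_or_eq_of_adj {a b : V} (h : IsolatedPair Adj σ i v u w) (ha : a = u ∨ a = w)
    (hab : Adj a b ∨ Adj b a) (hb : σ b = i) : b = u ∨ b = w := by
  by_contra hne
  refine h.2.2 b ?_ hb
  simp only [pairNbhd, mem_sdiff, mem_union, mem_insert, mem_singleton, outNbrs, inNbrs,
    mem_filter, mem_univ, true_and]
  refine ⟨?_, hne⟩
  rcases ha with rfl | rfl <;> tauto

theorem eq_or_eq_of_adj_source {b : V} (h : IsolatedPair Adj σ i v u w) (hb : Adj v b)
    (hσ : σ b = i) : b = u ∨ b = w := by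
  by_contra hne
  exact h.2.2 b (by simp [pairNbhd, outNbrs, hb, hne]) hσ

/-- A monochromatic path through `u` or `w` would stay inside `{u, w}`, but it has three
distinct vertices. -/
theorem not_uncolored {x : V} (h : IsolatedPair Adj σ i v u w) (hx : x = u ∨ x = w) :
    ¬ Uncolored Adj σ x := by
  rintro ⟨a, b, c, hab, hbc, hac, hAab, hAbc, hσab, hσbc, hxabc⟩
  have hσx : σ x = i := by rcases hx with rfl | rfl; exacts [h.1, h.2.1]
  have hσb : σ b = i := by rcases hxabc with rfl | rfl | rfl <;> simp_all
  have hb : b = u ∨ b = w := by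
    rcases hxabc with rfl | rfl | rfl
    · exact h.eq_or_eq_of_adj hx (.inl hAab) hσb
    · exact hx
    · exact h.eq_or_eq_of_adj hx (.inr hAbc) hσb
  have ha := h.eq_or_eq_of_adj hb (.inr hAab) (hσab.trans hσb)
  have hc := h.eq_or_eq_of_adj hb (.inl hAbc) (hσbc.symm.trans hσb)
  rcases ha with rfl | rfl <;> rcases hb with rfl | rfl <;> rcases hc with rfl | rfl <;>
    contradiction

theorem repeatedRetainedColor (h : IsolatedPair Adj σ i v u w) (hu : Adj v u) (hw : Adj v w)
    (huw : u ≠ w) : RepeatedRetainedColor Adj σ v i := by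
  refine ⟨Finite.one_lt_card_iff_nontrivial.2 ⟨⟨u, hu, h.1⟩, ⟨w, hw, h.2.1⟩, ?_⟩,
    fun x hx hσ => h.not_uncolored (h.eq_or_eq_of_adj_source hx hσ)⟩
  simpa using huw

end IsolatedPair

variable {C : ℕ}

theorem card_isolatedPairs_le_two (σ : V → Fin C) (i : Fin C) (v : V) :
    #{p ∈ (outNbrs Adj v).offDiag | IsolatedPair Adj σ i v p.1 p.2} ≤ 2 := by
  obtain h | ⟨⟨u, w⟩, huw⟩ := eq_empty_or_nonempty
    {p ∈ (outNbrs Adj v).offDiag | IsolatedPair Adj σ i v p.1 p.2}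
  · simp [h]
  simp only [mem_filter, mem_offDiag] at huw
  obtain ⟨⟨-, -, hne⟩, h⟩ := huw
  calc _ ≤ #({u, w} : Finset V).offDiag := card_le_card fun p hp => ?_
    _ = 2 := by simp [offDiag_card, card_pair hne]
  simp only [mem_filter, mem_offDiag, outNbrs, mem_univ, true_and] at hp
  obtain ⟨⟨hp₁, hp₂, hp⟩, hiso⟩ := hp
  simp only [mem_offDiag, mem_insert, mem_singleton]
  exact ⟨h.eq_or_eq_of_adj_source hp₁ hiso.1, h.eq_or_eq_of_adj_source hp₂ hiso.2.1, hp⟩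

theorem sum_card_isolatedPairs_le (σ : V → Fin C) (v : V) :
    ∑ i, #{p ∈ (outNbrs Adj v).offDiag | IsolatedPair Adj σ i v p.1 p.2} ≤ 2 * Xv Adj σ v := by
  classical
  have hX : Xv Adj σ v = #{i | RepeatedRetainedColor Adj σ v i} := by
    rw [← Fintype.card_subtype, ← Nat.card_eq_fintype_card]
    rfl
  rw [hX, ← sum_filter_of_ne (p := RepeatedRetainedColor Adj σ v), mul_comm, ← smul_eq_mul]
  · exact sum_le_card_nsmul _ _ _ fun i _ => card_isolatedPairs_le_two Adj σ i v
  intro i _ hi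
  obtain ⟨⟨u, w⟩, hp⟩ := card_ne_zero.1 hi
  simp only [mem_filter, mem_offDiag, outNbrs, mem_univ, true_and] at hp
  exact hp.2.repeatedRetainedColor hp.1.1 hp.1.2.1 hp.1.2.2

theorem sum_card_colorings_isolatedPair_le (v : V) :
    ∑ i : Fin C, ∑ p ∈ (outNbrs Adj v).offDiag, #{σ : V → Fin C | IsolatedPair Adj σ i v p.1 p.2}
      ≤ 2 * ∑ σ : V → Fin C, Xv Adj σ v := calc
  _ = ∑ σ : V → Fin C, ∑ i, #{p ∈ (outNbrs Adj v).offDiag | IsolatedPair Adj σ i v p.1 p.2} := by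
    simp only [card_filter]
    exact (sum_congr rfl fun i _ => sum_comm).trans sum_comm
  _ ≤ ∑ σ : V → Fin C, 2 * Xv Adj σ v :=
    sum_le_sum fun σ _ => sum_card_isolatedPairs_le Adj σ v
  _ = _ := by rw [mul_sum]

theorem card_isolatedPair_div_pow (hC : 0 < C) (i : Fin C) (v : V) {u w : V} (huw : u ≠ w) :
    (#{σ : V → Fin C | IsolatedPair Adj σ i v u w} : ℝ) / (C : ℝ) ^ Fintype.card V
      = (C : ℝ)⁻¹ ^ 2 * (1 - (C : ℝ)⁻¹) ^ #(pairNbhd Adj v u w) := by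
  rw [← card_pair huw, pairNbhd, ← card_filter_forall_eq_forall_ne_div_pow hC i disjoint_sdiff]
  congr 3
  ext σ
  simp [IsolatedPair, pairNbhd, and_assoc]

end

theorem le_expXv_of_degree_le {V : Type*} [Fintype V] [DecidableEq V] (Adj : V → V → Prop)
    {C K : ℕ} (hC : 0 < C) (hK : ∀ x, outDeg Adj x ≤ K ∧ inDeg Adj x ≤ K) (v : V) :
    (outDeg Adj v : ℝ) * (outDeg Adj v - 1) / (2 * C) * (1 - (C : ℝ)⁻¹) ^ (5 * K)
      ≤ expXv Adj C v := by
  classical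
  set P := (outNbrs Adj v).offDiag
  set n := Fintype.card V
  have hprob : ∀ i, ∀ p ∈ P, (C : ℝ)⁻¹ ^ 2 * (1 - (C : ℝ)⁻¹) ^ (5 * K)
      ≤ #{σ : V → Fin C | IsolatedPair Adj σ i v p.1 p.2} / (C : ℝ) ^ n := by
    intro i p hp
    rw [card_isolatedPair_div_pow Adj hC i v (mem_offDiag.1 hp).2.2]
    have hK' : #(pairNbhd Adj v p.1 p.2) ≤ 5 * K := by
      have := card_pairNbhd_le Adj v p.1 p.2
      have := hK v; have := hK p.1; have := hK p.2
      omega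
    have hC1 : (1 : ℝ) ≤ C := by exact_mod_cast hC
    exact mul_le_mul_of_nonneg_left (pow_le_pow_of_le_one
      (sub_nonneg.2 (inv_le_one_of_one_le₀ hC1)) (sub_le_self _ (by positivity)) hK')
      (by positivity)
  have hP : (#P : ℝ) = outDeg Adj v * (outDeg Adj v - 1) := by
    rw [offDiag_card, card_outNbrs, Nat.cast_sub (Nat.le_mul_self _)]
    push_cast
    ring
  calc (outDeg Adj v : ℝ) * (outDeg Adj v - 1) / (2 * C) * (1 - (C : ℝ)⁻¹) ^ (5 * K)
      = (∑ _i : Fin C, ∑ _p ∈ P, (C : ℝ)⁻¹ ^ 2 * (1 - (C : ℝ)⁻¹) ^ (5 * K)) / 2 := by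
        simp only [sum_const, card_univ, Fintype.card_fin, nsmul_eq_mul, hP]
        field_simp
    _ ≤ (∑ i, ∑ p ∈ P, (#{σ : V → Fin C | IsolatedPair Adj σ i v p.1 p.2} : ℝ) / C ^ n) / 2 := by
        gcongr with i _ p hp
        exact hprob i p hp
    _ ≤ (2 * ∑ σ : V → Fin C, (Xv Adj σ v : ℝ)) / C ^ n / 2 := by
        simp_rw [← sum_div]
        gcongr
        exact_mod_cast sum_card_colorings_isolatedPair_le Adj v
    _ = expXv Adj C v := by
        rw [expXv]
        ring

theorem exp_neg_eleven_le : Real.exp (-11) ≤ 1 / 12 := by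
  rw [Real.exp_neg, one_div]
  exact inv_anti₀ (by norm_num) (by linarith [Real.add_one_le_exp 11])

theorem three_halves_exp_neg_eleven_le_pow {Δ : ℝ} {K : ℕ} (hΔ : 1000 ≤ Δ)
    (hK : K ≤ (1 + Real.exp (-11) / 3) * Δ) :
    3 / 2 * Real.exp (-11) ≤ (1 - (⌊Δ / 2⌋₊ : ℝ)⁻¹) ^ (5 * K) := by
  have hC : Δ / 2 - 1 < ⌊Δ / 2⌋₊ := by linarith [Nat.lt_floor_add_one (Δ / 2)]
  have hε := exp_neg_eleven_le
  have hexponent : ((5 * K : ℕ) : ℝ) / (⌊Δ / 2⌋₊ - 1) ≤ 21 / 2 := by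
    rw [div_le_iff₀ (by linarith)]
    push_cast
    nlinarith
  calc 3 / 2 * Real.exp (-11) ≤ Real.exp (1 / 2) * Real.exp (-11) := by
        gcongr
        linarith [Real.add_one_le_exp (1 / 2)]
    _ = Real.exp (-(21 / 2)) := by rw [← Real.exp_add]; norm_num
    _ ≤ Real.exp (-(((5 * K : ℕ) : ℝ) / (⌊Δ / 2⌋₊ - 1))) := by gcongr
    _ ≤ _ := Real.exp_neg_div_le_one_sub_inv_pow (by linarith) _

theorem div_exp_eleven_sub_one_le {Δ : ℝ} {d K : ℕ} (hΔ : 1000 ≤ Δ)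
    (hd : (1 - Real.exp (-11) / 3) * Δ < d) (hK : K ≤ (1 + Real.exp (-11) / 3) * Δ) :
    Δ / Real.exp 11 - 1 ≤
      d * (d - 1) / (2 * ⌊Δ / 2⌋₊) * (1 - (⌊Δ / 2⌋₊ : ℝ)⁻¹) ^ (5 * K) := by
  set c := 1 - Real.exp (-11) / 3 with hc_def
  have hε := exp_neg_eleven_le
  have hε0 := Real.exp_pos (-11)
  have hC : 0 < (⌊Δ / 2⌋₊ : ℝ) := by linarith [Nat.lt_floor_add_one (Δ / 2)]
  have hC' : (⌊Δ / 2⌋₊ : ℝ) ≤ Δ / 2 := Nat.floor_le (by linarith)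
  have hc : 11 / 12 ≤ c ∧ c ≤ 1 := ⟨by linarith [hc_def], by linarith [hc_def]⟩
  have hcΔ : 0 ≤ c * c * Δ - c := by nlinarith
  have hpairs : c * c * Δ - c ≤ d * (d - 1) / (2 * ⌊Δ / 2⌋₊) := by
    rw [le_div_iff₀ (by positivity)]
    have : c * Δ * (c * Δ - 1) ≤ d * (d - 1) := by
      nlinarith [mul_nonneg (sub_nonneg.2 hd.le) (by nlinarith : (0 : ℝ) ≤ d + c * Δ - 1)]
    nlinarith [mul_le_mul_of_nonneg_left hC' hcΔ]
  calc Δ / Real.exp 11 - 1 ≤ (c * c * Δ - c) * (3 / 2 * Real.exp (-11)) := by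
        rw [div_eq_mul_inv, ← Real.exp_neg]
        nlinarith [mul_nonneg (by nlinarith : (0 : ℝ) ≤ 3 / 2 * c * c - 1)
          (mul_nonneg (by linarith : (0 : ℝ) ≤ Δ) hε0.le), mul_le_mul_of_nonneg_right hc.2 hε0.le]
    _ ≤ _ := mul_le_mul hpairs (three_halves_exp_neg_eleven_le_pow hΔ hK) (by positivity)
        (hcΔ.trans hpairs)

/-- **Lemma 2.** With `c₁ = 1 - e⁻¹¹/3`, `c₂ = 1 + e⁻¹¹/3`, suppose every vertex of the
digon-free digraph `D` satisfies `c₁Δ̃ < d⁺(v) < c₂Δ̃` and `c₁Δ̃ < d⁻(v) < c₂Δ̃`.  Color each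
vertex uniformly at random with one of `C = ⌊Δ̃/2⌋` colors and uncolor every vertex on a
monochromatic directed path with at least two arcs.  Then, provided `Δ̃` is sufficiently
large, `E[X_v] ≥ Δ̃/e¹¹ - 1` for every vertex `v`. -/
theorem stmt_4 :
    ∃ Δ₂ : ℝ, ∀ (V : Type) [Fintype V] [DecidableEq V] (Adj : V → V → Prop),
      DigonFree Adj →
      (∀ v : V,
        (1 - Real.exp (-11) / 3) * tildeDelta Adj < (outDeg Adj v : ℝ) ∧
        (outDeg Adj v : ℝ) < (1 + Real.exp (-11) / 3) * tildeDelta Adj ∧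
        (1 - Real.exp (-11) / 3) * tildeDelta Adj < (inDeg Adj v : ℝ) ∧
        (inDeg Adj v : ℝ) < (1 + Real.exp (-11) / 3) * tildeDelta Adj) →
      Δ₂ ≤ tildeDelta Adj →
      ∀ (C : ℕ), C = ⌊tildeDelta Adj / 2⌋₊ →
      ∀ v : V, tildeDelta Adj / Real.exp 11 - 1 ≤ expXv Adj C v := by
  refine ⟨1000, fun V _ _ Adj _ hdeg hΔ C hC v => ?_⟩
  set K := ⌊(1 + Real.exp (-11) / 3) * tildeDelta Adj⌋₊
  have hK : ∀ x, outDeg Adj x ≤ K ∧ inDeg Adj x ≤ K := fun x =>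
    ⟨Nat.le_floor (hdeg x).2.1.le, Nat.le_floor (hdeg x).2.2.2.le⟩
  have hKΔ : (K : ℝ) ≤ (1 + Real.exp (-11) / 3) * tildeDelta Adj :=
    Nat.floor_le (by nlinarith [Real.exp_pos (-11)])
  have hC0 : 0 < C := hC ▸ Nat.floor_pos.2 (by linarith)
  subst hC
  exact (div_exp_eleven_sub_one_le hΔ (hdeg v).1 hKΔ).trans (le_expXv_of_degree_le Adj hC0 hK v)
end

section
/- Suppose Δ₀ is an integer such that every digon-free digraph D with ⌈Δ̃(D)⌉ = Δ₀ satisfies χ(D) ≤ Δ₀ − 1. Then every digon-free digraph D with ⌈Δ̃(D)⌉ ≥ Δ₀ satisfies χ(D) ≤ ⌈Δ̃(D)⌉ − 1. -/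
section Development

variable {V W : Type*} {Adj : V → V → Prop} {Adj' : W → W → Prop}

lemma DigonFree.irrefl (h : DigonFree Adj) (v : V) : ¬ Adj v v := fun hv => h v v hv hv

abbrev inducedAdj (Adj : V → V → Prop) (S : Set V) : S → S → Prop := fun x y => Adj x y

namespace AcyclicSet

lemma subset {A B : Set V} (hA : AcyclicSet Adj A) (hBA : B ⊆ A) : AcyclicSet Adj B :=
  fun v hv hcyc =>
    hA v (hBA hv) (Relation.TransGen.mono (fun _ _ h => ⟨hBA h.1, hBA h.2.1, h.2.2⟩) _ _ hcyc)

lemma of_subsingleton (hirr : ∀ v, ¬ Adj v v) {A : Set V} (hA : A.Subsingleton) :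
    AcyclicSet Adj A := by
  intro v hv hcyc
  obtain ⟨c, ⟨-, hc, hvc⟩, -⟩ := Relation.TransGen.head'_iff.mp hcyc
  exact hirr v (hA hc hv ▸ hvc)

lemma flip {A : Set V} (hA : AcyclicSet Adj A) : AcyclicSet (flip Adj) A := by
  intro v hv hcyc
  refine hA v hv (Relation.transGen_swap.mp ?_)
  exact Relation.TransGen.mono (fun _ _ h => ⟨h.2.1, h.1, h.2.2⟩) _ _ hcyc

lemma preimage {f : W → V} (hf : ∀ x y, Adj' x y → Adj (f x) (f y)) {A : Set V}
    (hA : AcyclicSet Adj A) : AcyclicSet Adj' (f ⁻¹' A) :=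
  fun w hw hcyc => hA (f w) hw (hcyc.lift f fun _ _ h => ⟨h.1, h.2.1, hf _ _ h.2.2⟩)

lemma image {f : W → V} (hf : f.Injective) (hf' : ∀ x y, Adj (f x) (f y) → Adj' x y)
    {S : Set W} (hS : AcyclicSet Adj' S) : AcyclicSet Adj (f '' S) := by
  rintro _ ⟨w, hw, rfl⟩ hcyc
  have : Nonempty W := ⟨w⟩
  have hinv := Function.leftInverse_invFun hf
  refine hS w hw (hinv w ▸ hcyc.lift (Function.invFun f) ?_)
  rintro _ _ ⟨⟨x, hx, rfl⟩, ⟨y, hy, rfl⟩, hxy⟩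
  simp only [Function.onFun, hinv x, hinv y]
  exact ⟨hx, hy, hf' x y hxy⟩

lemma insert_of_forall_not_adj_s9 {A : Set V} (hA : AcyclicSet Adj A) {v : V} (hv : ¬ Adj v v)
    (hout : ∀ a ∈ A, ¬ Adj v a) : AcyclicSet Adj (insert v A) := by
  set r := fun x y => x ∈ insert v A ∧ y ∈ insert v A ∧ Adj x y
  have hsrc : ∀ x y, r x y → x ≠ v := by
    rintro x y ⟨-, rfl | hy, hxy⟩ rfl
    exacts [hv hxy, hout y hy hxy]
  have hpath : ∀ {x y}, Relation.TransGen r x y →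
      y = v ∨ Relation.TransGen (fun x y => x ∈ A ∧ y ∈ A ∧ Adj x y) x y := by
    intro x y hxy
    induction hxy with
    | single h =>
      rcases h.2.1 with rfl | hy
      · exact .inl rfl
      · exact .inr (.single ⟨h.1.resolve_left (hsrc _ _ h), hy, h.2.2⟩)
    | tail _ h ih =>
      rcases ih with rfl | ih
      · exact absurd rfl (hsrc _ _ h)
      rcases h.2.1 with rfl | hc
      · exact .inl rfl
      · exact .inr (ih.tail ⟨h.1.resolve_left (hsrc _ _ h), hc, h.2.2⟩)
  intro w hw hcyc
  rcases hpath hcyc with rfl | hcycA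
  · obtain ⟨c, hc, -⟩ := Relation.TransGen.head'_iff.mp hcyc
    exact hsrc _ _ hc rfl
  · obtain ⟨c, hc, -⟩ := Relation.TransGen.head'_iff.mp hcycA
    exact hA w hc.1 hcycA

end AcyclicSet

/-- Take `A` maximal acyclic: a vertex lacking an out- or in-neighbour in `A` could be added. -/
lemma exists_acyclicSet_forall_exists_adj [Finite V] (hirr : ∀ v, ¬ Adj v v) :
    ∃ A : Set V, AcyclicSet Adj A ∧ ∀ v ∉ A, (∃ a ∈ A, Adj v a) ∧ ∃ a ∈ A, Adj a v := by
  obtain ⟨A, hA⟩ := (Set.toFinite {A : Set V | AcyclicSet Adj A}).exists_maximal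
    ⟨∅, fun _ h => h.elim⟩
  refine ⟨A, hA.prop, fun v hv => ⟨?_, ?_⟩⟩ <;> by_contra! h
  · exact hv (hA.mem_of_prop_insert (hA.prop.insert_of_forall_not_adj_s9 (hirr v) h))
  · exact hv (hA.mem_of_prop_insert (hA.prop.flip.insert_of_forall_not_adj_s9 (hirr v) h).flip)

namespace DiColorable

lemma comap {f : W → V} (hf : ∀ x y, Adj' x y → Adj (f x) (f y)) {k : ℕ}
    (h : DiColorable Adj k) : DiColorable Adj' k :=
  let ⟨c, hc⟩ := h
  ⟨c ∘ f, fun i => (hc i).preimage hf⟩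

lemma extend {A : Set V} (hA : AcyclicSet Adj A) {k : ℕ}
    (h : DiColorable (inducedAdj Adj Aᶜ) k) : DiColorable Adj (k + 1) := by
  classical
  obtain ⟨c, hc⟩ := h
  refine ⟨fun v => if hv : v ∈ A then Fin.last k else (c ⟨v, hv⟩).castSucc, fun i => ?_⟩
  induction i using Fin.lastCases with
  | last =>
    refine hA.subset fun v hv => ?_
    by_contra hvA
    simp [hvA, Fin.castSucc_ne_last] at hv
  | cast j =>
    have hclass : {v | (if hv : v ∈ A then Fin.last k else (c ⟨v, hv⟩).castSucc) = j.castSucc}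
        = Subtype.val '' {x | c x = j} := by
      ext v
      by_cases hvA : v ∈ A <;> simp [hvA, (Fin.castSucc_ne_last j).symm]
    rw [hclass]
    exact (hc j).image Subtype.val_injective fun _ _ h => h

lemma of_finite [Finite V] (hirr : ∀ v, ¬ Adj v v) : DiColorable Adj (Nat.card V) :=
  ⟨Finite.equivFin V, fun _ => AcyclicSet.of_subsingleton hirr
    fun _ hx _ hy => (Finite.equivFin V).injective (hx.trans hy.symm)⟩

lemma dichromNum_le {k : ℕ} (h : DiColorable Adj k) : dichromNum Adj ≤ k := Nat.sInf_le h

end DiColorable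

lemma diColorable_dichromNum [Finite V] (hirr : ∀ v, ¬ Adj v v) :
    DiColorable Adj (dichromNum Adj) :=
  Nat.sInf_mem (s := {k | DiColorable Adj k}) ⟨_, DiColorable.of_finite hirr⟩

lemma dichromNum_pos [Finite V] [Nonempty V] (hirr : ∀ v, ¬ Adj v v) : 0 < dichromNum Adj :=
  let ⟨c, _⟩ := diColorable_dichromNum hirr
  (c (Classical.arbitrary V)).pos

lemma dichromNum_le_of_hom [Finite V] (hirr : ∀ v, ¬ Adj v v) {f : W → V}
    (hf : ∀ x y, Adj' x y → Adj (f x) (f y)) : dichromNum Adj' ≤ dichromNum Adj :=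
  ((diColorable_dichromNum hirr).comap hf).dichromNum_le

lemma dichromNum_le_dichromNum_inducedAdj_compl_add_one [Finite V] (hirr : ∀ v, ¬ Adj v v)
    {A : Set V} (hA : AcyclicSet Adj A) :
    dichromNum Adj ≤ dichromNum (inducedAdj Adj Aᶜ) + 1 :=
  ((diColorable_dichromNum (Adj := inducedAdj Adj Aᶜ) fun x => hirr x).extend hA).dichromNum_le

lemma outDeg_eq_of_injective {f : W → V} (hf : f.Injective)
    (hadj : ∀ x y, Adj (f x) (f y) ↔ Adj' x y) {x : W}
    (hrange : ∀ u, Adj (f x) u → u ∈ Set.range f) :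
    outDeg Adj (f x) = outDeg Adj' x := by
  refine Nat.card_congr (Equiv.ofBijective (fun u => ⟨f u, (hadj x u).2 u.2⟩) ⟨?_, ?_⟩).symm
  · exact fun u u' h => Subtype.ext (hf (congrArg Subtype.val h))
  · rintro ⟨u, hu⟩
    obtain ⟨y, rfl⟩ := hrange u hu
    exact ⟨⟨y, (hadj x y).1 hu⟩, rfl⟩

lemma inDeg_eq_of_injective {f : W → V} (hf : f.Injective)
    (hadj : ∀ x y, Adj (f x) (f y) ↔ Adj' x y) {x : W}
    (hrange : ∀ u, Adj u (f x) → u ∈ Set.range f) :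
    inDeg Adj (f x) = inDeg Adj' x :=
  outDeg_eq_of_injective (Adj := fun a b => Adj b a) (Adj' := fun a b => Adj' b a) hf
    (fun x y => hadj y x) hrange

lemma outDeg_inducedAdj_lt [Finite V] {S : Set V} {v a : V} (hv : v ∈ S) (ha : a ∉ S)
    (hva : Adj v a) : outDeg (inducedAdj Adj S) ⟨v, hv⟩ < outDeg Adj v := by
  classical
  have := Fintype.ofFinite V
  simp only [outDeg, Nat.card_eq_fintype_card]
  refine Fintype.card_lt_of_injective_of_notMem (fun u => ⟨u.1.1, u.2⟩) ?_ (b := ⟨a, hva⟩) ?_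
  · intro u u' h
    exact Subtype.ext (Subtype.ext (congrArg (fun w : {u // Adj v u} => w.1) h))
  · rintro ⟨u, hu⟩
    exact ha (congrArg Subtype.val hu ▸ u.1.2 :)

lemma inDeg_inducedAdj_lt [Finite V] {S : Set V} {v a : V} (hv : v ∈ S) (ha : a ∉ S)
    (hav : Adj a v) : inDeg (inducedAdj Adj S) ⟨v, hv⟩ < inDeg Adj v :=
  outDeg_inducedAdj_lt (Adj := fun x y => Adj y x) hv ha hav

section tildeDelta

variable [Fintype V]

variable (Adj) in
lemma tildeDelta_nonneg : 0 ≤ tildeDelta Adj :=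
  Real.iSup_nonneg fun _ => Real.sqrt_nonneg _

variable (Adj) in
lemma sqrt_outDeg_mul_inDeg_le_tildeDelta (v : V) :
    √((outDeg Adj v : ℝ) * inDeg Adj v) ≤ tildeDelta Adj :=
  le_ciSup (f := fun v => √((outDeg Adj v : ℝ) * inDeg Adj v)) (Set.finite_range _).bddAbove v

lemma tildeDelta_le {c : ℝ} (hc : 0 ≤ c) (h : ∀ v, √((outDeg Adj v : ℝ) * inDeg Adj v) ≤ c) :
    tildeDelta Adj ≤ c :=
  Real.iSup_le h hc

end tildeDelta

/-- Squared, this is AM-GM `2√(ab) ≤ a + b`. -/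
lemma Real.sqrt_sub_one_mul_sub_one_le {a b : ℝ} (ha : 1 ≤ a) (hb : 1 ≤ b) :
    √((a - 1) * (b - 1)) ≤ √(a * b) - 1 := by
  have hab : a * b = √(a * b) ^ 2 := (Real.sq_sqrt (by positivity)).symm
  have hs : 1 ≤ √(a * b) := Real.one_le_sqrt.mpr (one_le_mul_of_one_le_of_one_le ha hb)
  rw [Real.sqrt_le_left (by linarith)]
  nlinarith [sq_nonneg (a - b)]

lemma ceil_tildeDelta_inducedAdj_compl_le [Fintype V] {A : Set V} [Fintype ↥Aᶜ]
    (h : ∀ v ∉ A, (∃ a ∈ A, Adj v a) ∧ ∃ a ∈ A, Adj a v) :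
    ⌈tildeDelta (inducedAdj Adj Aᶜ)⌉₊ ≤ ⌈tildeDelta Adj⌉₊ - 1 := by
  rcases isEmpty_or_nonempty ↥Aᶜ with hA | hA
  · simp [tildeDelta]
  rw [← Nat.ceil_sub_one]
  refine Nat.ceil_mono (ciSup_le fun ⟨v, hv⟩ => ?_)
  obtain ⟨⟨a, ha, hva⟩, b, hb, hbv⟩ := h v hv
  have hout : (outDeg (inducedAdj Adj Aᶜ) ⟨v, hv⟩ : ℝ) + 1 ≤ outDeg Adj v := by
    exact_mod_cast outDeg_inducedAdj_lt hv (not_not.mpr ha) hva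
  have hin : (inDeg (inducedAdj Adj Aᶜ) ⟨v, hv⟩ : ℝ) + 1 ≤ inDeg Adj v := by
    exact_mod_cast inDeg_inducedAdj_lt hv (not_not.mpr hb) hbv
  set dout := (outDeg (inducedAdj Adj Aᶜ) ⟨v, hv⟩ : ℝ)
  set din := (inDeg (inducedAdj Adj Aᶜ) ⟨v, hv⟩ : ℝ)
  have : 0 ≤ dout := Nat.cast_nonneg _
  have : 0 ≤ din := Nat.cast_nonneg _
  calc √(dout * din) ≤ √(((outDeg Adj v : ℝ) - 1) * (inDeg Adj v - 1)) :=
        Real.sqrt_le_sqrt (mul_le_mul (by linarith) (by linarith) (by positivity) (by linarith))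
    _ ≤ √((outDeg Adj v : ℝ) * inDeg Adj v) - 1 :=
        Real.sqrt_sub_one_mul_sub_one_le (by linarith) (by linarith)
    _ ≤ tildeDelta Adj - 1 := by grw [sqrt_outDeg_mul_inDeg_le_tildeDelta Adj v]

section LiftRel

variable {r : V → V → Prop} {s : W → W → Prop}

lemma DigonFree.sumLiftRel (hr : DigonFree r) (hs : DigonFree s) :
    DigonFree (Sum.LiftRel r s) := by
  rintro _ _ (⟨h⟩ | ⟨h⟩) (⟨h'⟩ | ⟨h'⟩)
  exacts [hr _ _ h h', hs _ _ h h']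

lemma tildeDelta_sumLiftRel [Fintype V] [Fintype W] :
    tildeDelta (Sum.LiftRel r s) = max (tildeDelta r) (tildeDelta s) := by
  have hinl : ∀ x, outDeg (Sum.LiftRel r s) (.inl x) = outDeg r x ∧
      inDeg (Sum.LiftRel r s) (.inl x) = inDeg r x := fun x =>
    ⟨outDeg_eq_of_injective Sum.inl_injective (fun _ _ => Sum.liftRel_inl_inl)
      (by rintro (u | u) h; exacts [⟨u, rfl⟩, absurd h Sum.not_liftRel_inl_inr]),
    inDeg_eq_of_injective Sum.inl_injective (fun _ _ => Sum.liftRel_inl_inl)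
      (by rintro (u | u) h; exacts [⟨u, rfl⟩, absurd h Sum.not_liftRel_inr_inl])⟩
  have hinr : ∀ y, outDeg (Sum.LiftRel r s) (.inr y) = outDeg s y ∧
      inDeg (Sum.LiftRel r s) (.inr y) = inDeg s y := fun y =>
    ⟨outDeg_eq_of_injective Sum.inr_injective (fun _ _ => Sum.liftRel_inr_inr)
      (by rintro (u | u) h; exacts [absurd h Sum.not_liftRel_inr_inl, ⟨u, rfl⟩]),
    inDeg_eq_of_injective Sum.inr_injective (fun _ _ => Sum.liftRel_inr_inr)
      (by rintro (u | u) h; exacts [absurd h Sum.not_liftRel_inl_inr, ⟨u, rfl⟩])⟩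
  refine le_antisymm (tildeDelta_le (le_max_of_le_left (tildeDelta_nonneg r)) ?_) (max_le ?_ ?_)
  · rintro (x | y)
    · rw [(hinl x).1, (hinl x).2]
      exact (sqrt_outDeg_mul_inDeg_le_tildeDelta r x).trans (le_max_left _ _)
    · rw [(hinr y).1, (hinr y).2]
      exact (sqrt_outDeg_mul_inDeg_le_tildeDelta s y).trans (le_max_right _ _)
  · refine tildeDelta_le (tildeDelta_nonneg _) fun x => ?_
    rw [← (hinl x).1, ← (hinl x).2]
    exact sqrt_outDeg_mul_inDeg_le_tildeDelta _ _
  · refine tildeDelta_le (tildeDelta_nonneg _) fun y => ?_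
    rw [← (hinr y).1, ← (hinr y).2]
    exact sqrt_outDeg_mul_inDeg_le_tildeDelta _ _

end LiftRel

/-- The directed triangle with each vertex blown up into `n` independent copies. -/
def triangleBlowup (n : ℕ) : ZMod 3 × Fin n → ZMod 3 × Fin n → Prop :=
  fun a b => b.1 = a.1 + 1

lemma triangleBlowup_digonFree (n : ℕ) : DigonFree (triangleBlowup n) := by
  intro a b hab hba
  rw [triangleBlowup, hab, add_assoc, left_eq_add] at hba
  exact absurd hba (by decide)

lemma outDeg_triangleBlowup (n : ℕ) (a : ZMod 3 × Fin n) : outDeg (triangleBlowup n) a = n :=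
  (Nat.card_congr ⟨fun u => u.1.2, fun i => ⟨(a.1 + 1, i), rfl⟩,
    fun u => Subtype.ext (Prod.ext u.2.symm rfl), fun _ => rfl⟩).trans (Nat.card_fin n)

lemma inDeg_triangleBlowup (n : ℕ) (a : ZMod 3 × Fin n) : inDeg (triangleBlowup n) a = n :=
  (Nat.card_congr ⟨fun u => u.1.2, fun i => ⟨(a.1 - 1, i), (sub_add_cancel _ _).symm⟩,
    fun u => Subtype.ext (Prod.ext (eq_sub_of_add_eq u.2.symm).symm rfl), fun _ => rfl⟩).trans
    (Nat.card_fin n)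

lemma tildeDelta_triangleBlowup (n : ℕ) : tildeDelta (triangleBlowup n) = n := by
  have hv : ∀ a, √((outDeg (triangleBlowup n) a : ℝ) * inDeg (triangleBlowup n) a) = n :=
    fun a => by rw [outDeg_triangleBlowup, inDeg_triangleBlowup, Real.sqrt_mul_self n.cast_nonneg]
  refine le_antisymm (tildeDelta_le n.cast_nonneg fun a => (hv a).le) ?_
  rcases n.eq_zero_or_pos with rfl | hn
  · simpa using tildeDelta_nonneg (triangleBlowup 0)
  · exact (hv (0, ⟨0, hn⟩)).symm.le.trans (sqrt_outDeg_mul_inDeg_le_tildeDelta _ _)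

/-- A disjoint copy of `triangleBlowup n` raises `⌈Δ̃⌉` to exactly `n`. -/
lemma dichromNum_le_of_ceil_tildeDelta_le {n : ℕ}
    (h : ∀ (V : Type) [Fintype V] (Adj : V → V → Prop),
      DigonFree Adj → ⌈tildeDelta Adj⌉₊ = n → dichromNum Adj ≤ n - 1)
    {V : Type} [Fintype V] {Adj : V → V → Prop} (hD : DigonFree Adj)
    (hle : ⌈tildeDelta Adj⌉₊ ≤ n) : dichromNum Adj ≤ n - 1 := by
  have hD' := hD.sumLiftRel (triangleBlowup_digonFree n)
  have hΔ : ⌈tildeDelta (Sum.LiftRel Adj (triangleBlowup n))⌉₊ = n := by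
    rw [tildeDelta_sumLiftRel, tildeDelta_triangleBlowup, max_eq_right (Nat.ceil_le.mp hle),
      Nat.ceil_natCast]
  exact (dichromNum_le_of_hom hD'.irrefl fun _ _ => Sum.LiftRel.inl).trans
    (h _ _ hD' hΔ)

lemma ceil_tildeDelta_emptyRelation [Fintype V] :
    ⌈tildeDelta (fun _ _ : V => False)⌉₊ = 0 :=
  Nat.ceil_eq_zero.mpr (tildeDelta_le le_rfl fun _ => by simp [outDeg])

/-- The hypothesis fails for `n = 0` because a single vertex needs one colour. -/
lemma pos_of_forall_ceil_tildeDelta_eq {n : ℕ}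
    (h : ∀ (V : Type) [Fintype V] (Adj : V → V → Prop),
      DigonFree Adj → ⌈tildeDelta Adj⌉₊ = n → dichromNum Adj ≤ n - 1) : 0 < n := by
  refine n.pos_of_ne_zero fun hn => ?_
  subst hn
  exact (dichromNum_pos (V := Unit) fun _ => id).not_ge
    (h Unit _ (fun _ _ h => h.elim) ceil_tildeDelta_emptyRelation)

end Development

/-- **Proposition 1.** Suppose `Δ₀` is an integer such that every digon-free digraph `D`
with `⌈Δ̃(D)⌉ = Δ₀` satisfies `χ(D) ≤ Δ₀ - 1`.  Then every digon-free digraph `D` with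
`⌈Δ̃(D)⌉ ≥ Δ₀` satisfies `χ(D) ≤ ⌈Δ̃(D)⌉ - 1`. -/
theorem stmt_9 (Δ₀ : ℕ)
    (h : ∀ (V : Type) [Fintype V] (Adj : V → V → Prop),
      DigonFree Adj → ⌈tildeDelta Adj⌉₊ = Δ₀ → dichromNum Adj ≤ Δ₀ - 1) :
    ∀ (V : Type) [Fintype V] (Adj : V → V → Prop),
      DigonFree Adj → Δ₀ ≤ ⌈tildeDelta Adj⌉₊ →
      dichromNum Adj ≤ ⌈tildeDelta Adj⌉₊ - 1 := by
  intro V _ Adj hD hge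
  induction hΔ : ⌈tildeDelta Adj⌉₊ using Nat.strong_induction_on generalizing V with
  | _ Δ ih =>
  rcases (hΔ ▸ hge).eq_or_lt with rfl | hlt
  · exact h V Adj hD hΔ
  classical
  obtain ⟨A, hA, hdom⟩ := exists_acyclicSet_forall_exists_adj hD.irrefl
  have hDA : DigonFree (inducedAdj Adj Aᶜ) := fun x y => hD x y
  have hΔA : ⌈tildeDelta (inducedAdj Adj Aᶜ)⌉₊ ≤ Δ - 1 :=
    hΔ ▸ ceil_tildeDelta_inducedAdj_compl_le hdom
  have hχA : dichromNum (inducedAdj Adj Aᶜ) ≤ Δ - 2 := by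
    rcases le_or_gt Δ₀ ⌈tildeDelta (inducedAdj Adj Aᶜ)⌉₊ with hle | hgt
    · exact (ih _ (by omega) _ _ hDA hle rfl).trans (by omega)
    · exact (dichromNum_le_of_ceil_tildeDelta_le h hDA hgt.le).trans (by omega)
  have := dichromNum_le_dichromNum_inducedAdj_compl_add_one hD.irrefl hA
  have := pos_of_forall_ceil_tildeDelta_eq h
  omega
end

section
/- There exists a 3-regular digraph D on 7 vertices without digons such that χ(D) = 3 (so the bound χ(D) ≤ ⌈Δ̃(D)⌉ is tight for ⌈Δ̃⌉ = 3). -/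
/-! The Paley tournament on `ℤ/7`, with an arc `a → b` whenever `b - a` is a nonzero square
`1, 2, 4`, is a 3-regular tournament. Its vertex set splits into the transitive triples
`{0,1,2}`, `{3,4,5}` and `{6}`, so it is 3-colorable. It is not 2-colorable: one of the two
classes would contain four vertices, and every four vertices of this tournament span a directed
triangle. -/

section Digraph

variable {V : Type*} (Adj : V → V → Prop)

theorem acyclicSet_of_rank_lt {α : Type*} [Preorder α] {A : Set V} (r : V → α)
    (h : ∀ x ∈ A, ∀ y ∈ A, Adj x y → r x < r y) : AcyclicSet Adj A := by
  intro v _ hcyc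
  have rank_lt :
      ∀ w, Relation.TransGen (fun x y => x ∈ A ∧ y ∈ A ∧ Adj x y) v w → r v < r w := by
    intro w hw
    induction hw with
    | single hvw => exact h _ hvw.1 _ hvw.2.1 hvw.2.2
    | tail _ hwu ih => exact ih.trans (h _ hwu.1 _ hwu.2.1 hwu.2.2)
  exact lt_irrefl _ (rank_lt v hcyc)

theorem not_acyclicSet_of_triangle {A : Set V} {a b c : V} (ha : a ∈ A) (hb : b ∈ A)
    (hc : c ∈ A) (hab : Adj a b) (hbc : Adj b c) (hca : Adj c a) : ¬ AcyclicSet Adj A :=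
  fun hA => hA a ha <|
    (Relation.TransGen.single ⟨ha, hb, hab⟩).tail ⟨hb, hc, hbc⟩ |>.tail ⟨hc, ha, hca⟩

variable {Adj}

theorem DiColorable.mono {k m : ℕ} (hkm : k ≤ m) (hk : DiColorable Adj k) :
    DiColorable Adj m := by
  obtain ⟨f, hf⟩ := hk
  refine ⟨fun v => Fin.castLE hkm (f v), fun i v hv hcyc => ?_⟩
  refine hf (f v) v rfl (Relation.TransGen.mono ?_ _ _ hcyc)
  rintro x y ⟨hx, hy, hxy⟩
  exact ⟨Fin.castLE_injective hkm (hx.trans hv.symm),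
    Fin.castLE_injective hkm (hy.trans hv.symm), hxy⟩

theorem dichromNum_eq_succ {k : ℕ} (hcol : DiColorable Adj (k + 1))
    (hnot : ¬ DiColorable Adj k) : dichromNum Adj = k + 1 :=
  (Nat.sInf_upward_closed_eq_succ_iff (fun _ _ hmn hm => hm.mono hmn) k).2 ⟨hcol, hnot⟩

end Digraph

def paleyAdj (a b : Fin 7) : Prop := b - a = 1 ∨ b - a = 2 ∨ b - a = 4

instance : DecidableRel paleyAdj := fun a b => by unfold paleyAdj; infer_instance

theorem paley_digonFree : DigonFree paleyAdj := by
  unfold DigonFree; decide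

theorem paley_outDeg_inDeg (v : Fin 7) : outDeg paleyAdj v = 3 ∧ inDeg paleyAdj v = 3 := by
  rw [outDeg, inDeg, Nat.card_eq_fintype_card, Nat.card_eq_fintype_card]
  revert v; decide

theorem paley_lt_of_div_three_eq :
    ∀ x y : Fin 7, paleyAdj x y → x.val / 3 = y.val / 3 → x < y := by
  decide

theorem paley_diColorable_three : DiColorable paleyAdj 3 :=
  ⟨fun v => ⟨v / 3, by omega⟩, fun i => acyclicSet_of_rank_lt _ id fun x hx y hy hxy =>
    paley_lt_of_div_three_eq x y hxy (Fin.val_eq_of_eq (hx.trans hy.symm))⟩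

set_option maxRecDepth 10000 in
theorem paley_exists_triangle_of_four_le_card : ∀ s : Finset (Fin 7), 4 ≤ s.card →
    ∃ a ∈ s, ∃ b ∈ s, ∃ c ∈ s, paleyAdj a b ∧ paleyAdj b c ∧ paleyAdj c a := by
  decide

theorem paley_not_diColorable_two : ¬ DiColorable paleyAdj 2 := by
  rintro ⟨f, hf⟩
  obtain ⟨i, hi⟩ := Fintype.exists_lt_card_fiber_of_mul_lt_card f (n := 3) (by decide)
  obtain ⟨a, ha, b, hb, c, hc, hab, hbc, hca⟩ := paley_exists_triangle_of_four_le_card _ hi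
  simp only [Finset.mem_filter, Finset.mem_univ, true_and] at ha hb hc
  exact not_acyclicSet_of_triangle paleyAdj ha hb hc hab hbc hca (hf i)

/-- There exists a 3-regular digraph on 7 vertices without digons whose chromatic number
equals 3 (so the bound `χ(D) ≤ ⌈Δ̃(D)⌉` is tight for `⌈Δ̃⌉ = 3`). -/
theorem stmt_15 :
    ∃ Adj : Fin 7 → Fin 7 → Prop,
      DigonFree Adj ∧
      (∀ v, outDeg Adj v = 3 ∧ inDeg Adj v = 3) ∧
      dichromNum Adj = 3 :=
  ⟨paleyAdj, paley_digonFree, paley_outDeg_inDeg,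
    dichromNum_eq_succ paley_diColorable_three paley_not_diColorable_two⟩
end
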